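/- arXiv:1801.02910 — 3 statements merged into one kernel-verified Lean document; each statement's English description precedes it below -/
import Mathlib

section
/- Let f ∈ k[x₁,…,xₙ] and g ∈ k[y₁,…,y_m] be polynomials vanishing at the origin. Then σ(f+g) = σ(f) + σ(g), where f+g is viewed as a polynomial in k[x,y]. -/
open MvPolynomial Pointwise

noncomputable def suppSet {ι k : Type*} [CommSemiring k] (f : MvPolynomial ι k) :
    Set (ι → ℝ) :=
  (fun d : ι →₀ ℕ => fun i => (d i : ℝ)) '' (f.support : Set (ι →₀ ℕ))

noncomputable def newton {ι k : Type*} [CommSemiring k] (f : MvPolynomial ι k) :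
    Set (ι → ℝ) :=
  convexHull ℝ (suppSet f) + {x : ι → ℝ | ∀ i, 0 ≤ x i}

noncomputable def sigmaP {ι k : Type*} [CommSemiring k] (f : MvPolynomial ι k) : ENNReal :=
  sSup {s : ENNReal | ∃ σ : ℝ, 0 < σ ∧ s = ENNReal.ofReal σ ∧ (fun _ : ι => 1 / σ) ∈ newton f}

noncomputable def NV {ι k : Type*} [Fintype ι] [CommSemiring k]
    (f : MvPolynomial ι k) (a : ι → ℝ) : ℝ :=
  sInf ((fun x => ∑ i, a i * x i) '' newton f)

noncomputable def meetLocus {ι k : Type*} [Fintype ι] [CommSemiring k]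
    (f : MvPolynomial ι k) (a : ι → ℝ) : Set (ι → ℝ) :=
  {x ∈ newton f | ∑ i, a i * x i = NV f a}

open Classical in
noncomputable def trunc {ι k : Type*} [CommSemiring k]
    (f : MvPolynomial ι k) (τ : Set (ι → ℝ)) : MvPolynomial ι k :=
  ∑ d ∈ f.support, if (fun i => (d i : ℝ)) ∈ τ then monomial d (f.coeff d) else 0

def nondegWrt {ι k : Type*} [Fintype ι] [Field k]
    (f : MvPolynomial ι k) (τ : Set (ι → ℝ)) : Prop :=
  ¬ ∃ x : ι → AlgebraicClosure k, (∀ i, x i ≠ 0) ∧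
      ∀ i, eval x (pderiv i (map (algebraMap k (AlgebraicClosure k)) (trunc f τ))) = 0

def weakNondegWrt {ι k : Type*} [Fintype ι] [Field k]
    (f : MvPolynomial ι k) (τ : Set (ι → ℝ)) : Prop :=
  ¬ ∃ x : ι → AlgebraicClosure k, (∀ i, x i ≠ 0) ∧
      eval x (map (algebraMap k (AlgebraicClosure k)) (trunc f τ)) = 0 ∧
      ∀ i, eval x (pderiv i (map (algebraMap k (AlgebraicClosure k)) (trunc f τ))) = 0

def isNondeg {ι k : Type*} [Fintype ι] [Field k] (f : MvPolynomial ι k) : Prop :=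
  ∀ a : ι → ℝ, (∀ i, 0 ≤ a i) → nondegWrt f (meetLocus f a)

/-!
For `μ > 0` the diagonal point `(1/μ, …, 1/μ)` lies in the Newton polyhedron of `h` iff
`μ • c ≤ 1` for some `c` in the convex hull of the exponents of `h`. If `p` and `q` live in
disjoint sets of variables and `p` has no constant term, no monomials cancel in `p + q`, so a point
of the hull of its exponents is a convex combination `u • (a, 0) + v • (0, b)` of points of the
hulls for `p` and `q`, and `μ • (u • a, v • b) ≤ 1` splits into `(μ u) • a ≤ 1` and
`(μ v) • b ≤ 1`. Hence, once `0` is adjoined, the set of such `μ` for `p + q` is the Minkowski sum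
of the sets for `p` and `q`, and `σ`, its supremum, is additive.
-/

open Function Set

theorem convexHull_union_subset {𝕜 E : Type*} [Field 𝕜] [LinearOrder 𝕜] [IsStrictOrderedRing 𝕜]
    [AddCommGroup E] [Module 𝕜 E] (s t : Set E) :
    convexHull 𝕜 (s ∪ t) ⊆
      convexHull 𝕜 s ∪ convexHull 𝕜 t ∪ convexJoin 𝕜 (convexHull 𝕜 s) (convexHull 𝕜 t) := by
  rcases s.eq_empty_or_nonempty with rfl | hs
  · simp
  rcases t.eq_empty_or_nonempty with rfl | ht
  · simp
  rw [convexHull_union hs ht]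
  exact subset_union_right

theorem ENNReal.sSup_ofReal_image_add {s t : Set ℝ} (hs : s.Nonempty) (ht : t.Nonempty)
    (hs₀ : s ⊆ Ici 0) (ht₀ : t ⊆ Ici 0) :
    sSup (ENNReal.ofReal '' (s + t)) = sSup (ENNReal.ofReal '' s) + sSup (ENNReal.ofReal '' t) := by
  apply le_antisymm
  · refine sSup_le ?_
    rintro _ ⟨_, ⟨x, hx, y, hy, rfl⟩, rfl⟩
    rw [ENNReal.ofReal_add (hs₀ hx) (ht₀ hy)]
    exact add_le_add (le_sSup (mem_image_of_mem _ hx)) (le_sSup (mem_image_of_mem _ hy))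
  · rw [sSup_image, sSup_image]
    refine ENNReal.biSup_add_biSup_le hs ht fun x hx y hy => ?_
    rw [← ENNReal.ofReal_add (hs₀ hx) (ht₀ hy)]
    exact le_sSup (mem_image_of_mem _ (add_mem_add hx hy))

section ExtendByZero

variable {ι ι' κ : Type*}

theorem Function.extend_zero_le_one_iff {γ : Type*} [Zero γ] [One γ] [Preorder γ]
    [ZeroLEOneClass γ] {e : ι → κ} (he : Injective e) {a : ι → γ} :
    extend e a 0 ≤ 1 ↔ a ≤ 1 :=
  ⟨fun h i => by simpa [he.extend_apply] using h (e i), fun h => extend_le_one h zero_le_one⟩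

theorem Function.extend_zero_add_extend_zero_le_one_iff {γ : Type*} [AddZeroClass γ] [One γ]
    [Preorder γ] [ZeroLEOneClass γ] {e₁ : ι → κ} {e₂ : ι' → κ} (he₁ : Injective e₁)
    (he₂ : Injective e₂) (hdisj : Disjoint (range e₁) (range e₂)) {a : ι → γ} {b : ι' → γ} :
    extend e₁ a 0 + extend e₂ b 0 ≤ 1 ↔ a ≤ 1 ∧ b ≤ 1 := by
  have h₁ (j) (hj : j ∉ range e₁) : extend e₁ a 0 j = 0 := extend_apply' _ _ _ hj
  have h₂ (j) (hj : j ∉ range e₂) : extend e₂ b 0 j = 0 := extend_apply' _ _ _ hj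
  refine ⟨fun h => ⟨fun i => ?_, fun i => ?_⟩, fun ⟨ha, hb⟩ j => ?_⟩
  · simpa [he₁.extend_apply, h₂ _ (hdisj.notMem_of_mem_left (mem_range_self i))] using h (e₁ i)
  · simpa [he₂.extend_apply, h₁ _ (hdisj.notMem_of_mem_right (mem_range_self i))] using h (e₂ i)
  · by_cases hj : j ∈ range e₁
    · simpa [h₂ _ (hdisj.notMem_of_mem_left hj)] using (extend_zero_le_one_iff he₁).2 ha j
    · simpa [h₁ _ hj] using (extend_zero_le_one_iff he₂).2 hb j

end ExtendByZero

section Newton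

variable {ι ι' κ k : Type*} [CommSemiring k]

/-- Adjoining `0` makes this set additive under sums of polynomials in disjoint variables, also
when a summand vanishes. -/
def diagonalSet (h : MvPolynomial ι k) : Set ℝ :=
  insert 0 {μ | 0 < μ ∧ (fun _ : ι => 1 / μ) ∈ newton h}

theorem sigmaP_eq_sSup_diagonalSet (h : MvPolynomial ι k) :
    sigmaP h = sSup (ENNReal.ofReal '' diagonalSet h) := by
  rw [diagonalSet, image_insert_eq, sSup_insert, ENNReal.ofReal_zero, ← bot_eq_zero, bot_sup_eq,
    sigmaP]
  congr 1
  ext s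
  simp only [mem_ofPred_eq, mem_image]
  exact ⟨fun ⟨μ, hμ, hs, hmem⟩ => ⟨μ, ⟨hμ, hmem⟩, hs.symm⟩,
    fun ⟨μ, ⟨hμ, hmem⟩, hs⟩ => ⟨μ, hμ, hs.symm, hmem⟩⟩

theorem one_div_mem_newton_iff {h : MvPolynomial ι k} {μ : ℝ} (hμ : 0 < μ) :
    (fun _ : ι => 1 / μ) ∈ newton h ↔ ∃ c ∈ convexHull ℝ (suppSet h), μ • c ≤ 1 := by
  have hle (c : ι → ℝ) (i : ι) : c i ≤ 1 / μ ↔ (μ • c) i ≤ 1 := by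
    rw [Pi.smul_apply, smul_eq_mul, le_div_iff₀' hμ]
  constructor
  · rintro ⟨c, hc, r, hr, hcr⟩
    refine ⟨c, hc, fun i => (hle c i).1 ?_⟩
    rw [← congrFun hcr i]
    exact le_add_of_nonneg_right (hr i)
  · rintro ⟨c, hc, hμc⟩
    exact ⟨c, hc, _, fun i => sub_nonneg.2 ((hle c i).2 (hμc i)), add_sub_cancel c _⟩

theorem mem_diagonalSet_iff {h : MvPolynomial ι k} {μ : ℝ} :
    μ ∈ diagonalSet h ↔ μ = 0 ∨ 0 < μ ∧ ∃ c ∈ convexHull ℝ (suppSet h), μ • c ≤ 1 := by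
  simp only [diagonalSet, mem_insert_iff, mem_ofPred_eq]
  exact or_congr_right ⟨fun ⟨hμ, hmem⟩ => ⟨hμ, (one_div_mem_newton_iff hμ).1 hmem⟩,
    fun ⟨hμ, hc⟩ => ⟨hμ, (one_div_mem_newton_iff hμ).2 hc⟩⟩

theorem mem_diagonalSet_of_smul_le {h : MvPolynomial ι k} {μ : ℝ} {c : ι → ℝ} (hμ : 0 ≤ μ)
    (hc : c ∈ convexHull ℝ (suppSet h)) (hμc : μ • c ≤ 1) : μ ∈ diagonalSet h :=
  mem_diagonalSet_iff.2 <| hμ.eq_or_lt.imp Eq.symm fun hμ => ⟨hμ, c, hc, hμc⟩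

theorem diagonalSet_subset_Ici (h : MvPolynomial ι k) : diagonalSet h ⊆ Ici 0 := by
  rintro μ (rfl | ⟨hμ, -⟩)
  exacts [self_mem_Ici, hμ.le]

theorem diagonalSet_mono {p q : MvPolynomial ι k} (hpq : suppSet p ⊆ suppSet q) :
    diagonalSet p ⊆ diagonalSet q := by
  simp only [subset_def, mem_diagonalSet_iff]
  rintro μ (rfl | ⟨hμ, c, hc, hμc⟩)
  exacts [Or.inl rfl, Or.inr ⟨hμ, c, convexHull_mono hpq hc, hμc⟩]

theorem suppSet_rename {e : ι → κ} (he : Injective e) (p : MvPolynomial ι k) :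
    suppSet (rename e p) = Function.ExtendByZero.linearMap ℝ e '' suppSet p := by
  classical
  rw [suppSet, support_rename_of_injective he, Finset.coe_image, ← image_comp, suppSet,
    ← image_comp]
  refine image_congr fun d _ => funext fun j => ?_
  by_cases hj : j ∈ range e
  · obtain ⟨i, rfl⟩ := hj
    simp [Finsupp.mapDomain_apply he, he.extend_apply]
  · simp [Finsupp.mapDomain_of_notMem_range _ _ hj, extend_apply' _ _ _ hj]

theorem diagonalSet_rename {e : ι → κ} (he : Injective e) (p : MvPolynomial ι k) :
    diagonalSet (rename e p) = diagonalSet p := by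
  have hle (c : ι → ℝ) : Function.ExtendByZero.linearMap ℝ e c ≤ 1 ↔ c ≤ 1 :=
    extend_zero_le_one_iff he
  ext μ
  simp only [mem_diagonalSet_iff, suppSet_rename he, ← LinearMap.image_convexHull,
    exists_mem_image, ← map_smul, hle]

theorem suppSet_add_of_disjoint {p q : MvPolynomial ι k} (h : Disjoint p.support q.support) :
    suppSet (p + q) = suppSet p ∪ suppSet q := by
  classical
  rw [suppSet, suppSet, suppSet, ← image_union, ← Finset.coe_union]
  congr
  exact Finsupp.support_add_eq h

theorem disjoint_support_rename_rename {e₁ : ι → κ} {e₂ : ι' → κ} (he₁ : Injective e₁)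
    (hdisj : Disjoint (range e₁) (range e₂)) {p : MvPolynomial ι k} (hp : constantCoeff p = 0)
    (q : MvPolynomial ι' k) : Disjoint (rename e₁ p).support (rename e₂ q).support := by
  classical
  rw [support_rename_of_injective he₁, Finset.disjoint_left]
  rintro _ hd' hq
  obtain ⟨d, hd, rfl⟩ := Finset.mem_image.1 hd'
  obtain ⟨i, hi⟩ : ∃ i, d i ≠ 0 := by
    by_contra! h
    rw [show d = 0 from Finsupp.ext h, mem_support_iff, ← constantCoeff_eq, hp] at hd
    exact hd rfl
  refine mem_support_iff.1 hq (coeff_rename_eq_zero _ _ _ fun u hu => absurd ?_ hi)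
  have := DFunLike.congr_fun hu (e₁ i)
  rwa [Finsupp.mapDomain_of_notMem_range _ _ (hdisj.notMem_of_mem_left (mem_range_self i)),
    Finsupp.mapDomain_apply he₁, eq_comm] at this

variable {e₁ : ι → κ} {e₂ : ι' → κ}

local notation "E₁" => Function.ExtendByZero.linearMap ℝ e₁
local notation "E₂" => Function.ExtendByZero.linearMap ℝ e₂

theorem suppSet_rename_add_rename (he₁ : Injective e₁) (he₂ : Injective e₂)
    (hdisj : Disjoint (range e₁) (range e₂)) {p : MvPolynomial ι k} (hp : constantCoeff p = 0)
    (q : MvPolynomial ι' k) :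
    suppSet (rename e₁ p + rename e₂ q) = E₁ '' suppSet p ∪ E₂ '' suppSet q := by
  rw [suppSet_add_of_disjoint (disjoint_support_rename_rename he₁ hdisj hp q),
    suppSet_rename he₁, suppSet_rename he₂]

theorem diagonalSet_rename_add_rename_subset (he₁ : Injective e₁) (he₂ : Injective e₂)
    (hdisj : Disjoint (range e₁) (range e₂)) {p : MvPolynomial ι k} (hp : constantCoeff p = 0)
    (q : MvPolynomial ι' k) :
    diagonalSet (rename e₁ p + rename e₂ q) ⊆ diagonalSet p + diagonalSet q := by
  intro μ hμ
  rcases mem_diagonalSet_iff.1 hμ with rfl | ⟨hμ, c, hc, hμc⟩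
  · exact ⟨0, mem_insert 0 _, 0, mem_insert 0 _, zero_add 0⟩
  rw [suppSet_rename_add_rename he₁ he₂ hdisj hp q] at hc
  rcases convexHull_union_subset _ _ hc with (hc | hc) | hc
  · rw [← suppSet_rename he₁] at hc
    refine ⟨μ, ?_, 0, mem_insert 0 _, add_zero μ⟩
    exact diagonalSet_rename he₁ p ▸ mem_diagonalSet_of_smul_le hμ.le hc hμc
  · rw [← suppSet_rename he₂] at hc
    refine ⟨0, mem_insert 0 _, μ, ?_, zero_add μ⟩
    exact diagonalSet_rename he₂ q ▸ mem_diagonalSet_of_smul_le hμ.le hc hμc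
  · obtain ⟨_, ha, _, hb, u, v, hu, hv, huv, rfl⟩ := mem_convexJoin.1 hc
    rw [← LinearMap.image_convexHull] at ha hb
    obtain ⟨a, ha, rfl⟩ := ha
    obtain ⟨b, hb, rfl⟩ := hb
    have hsplit : μ • (u • E₁ a + v • E₂ b) = E₁ ((μ * u) • a) + E₂ ((μ * v) • b) := by
      simp only [smul_add, map_smul, mul_smul]
    rw [hsplit] at hμc
    replace hμc := (extend_zero_add_extend_zero_le_one_iff he₁ he₂ hdisj).1 hμc
    refine ⟨μ * u, mem_diagonalSet_of_smul_le (by positivity) ha hμc.1,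
      μ * v, mem_diagonalSet_of_smul_le (by positivity) hb hμc.2, ?_⟩
    simp only [← mul_add, huv, mul_one]

theorem add_subset_diagonalSet_rename_add_rename (he₁ : Injective e₁) (he₂ : Injective e₂)
    (hdisj : Disjoint (range e₁) (range e₂)) {p : MvPolynomial ι k} (hp : constantCoeff p = 0)
    (q : MvPolynomial ι' k) :
    diagonalSet p + diagonalSet q ⊆ diagonalSet (rename e₁ p + rename e₂ q) := by
  have hsupp := suppSet_rename_add_rename he₁ he₂ hdisj hp q
  rintro _ ⟨μ₁, h₁, μ₂, h₂, rfl⟩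
  rcases mem_diagonalSet_iff.1 h₁ with rfl | ⟨hμ₁, a, ha, hμa⟩
  · rw [← diagonalSet_rename he₂] at h₂
    simpa only [zero_add] using
      diagonalSet_mono (hsupp ▸ suppSet_rename he₂ q ▸ subset_union_right) h₂
  rcases mem_diagonalSet_iff.1 h₂ with rfl | ⟨hμ₂, b, hb, hμb⟩
  · rw [← diagonalSet_rename he₁] at h₁
    simpa only [add_zero] using
      diagonalSet_mono (hsupp ▸ suppSet_rename he₁ p ▸ subset_union_left) h₁
  have hμ : 0 < μ₁ + μ₂ := add_pos hμ₁ hμ₂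
  have ha' : E₁ a ∈ convexHull ℝ (suppSet (rename e₁ p + rename e₂ q)) := by
    rw [hsupp]
    exact convexHull_mono subset_union_left
      (LinearMap.image_convexHull E₁ _ ▸ mem_image_of_mem _ ha)
  have hb' : E₂ b ∈ convexHull ℝ (suppSet (rename e₁ p + rename e₂ q)) := by
    rw [hsupp]
    exact convexHull_mono subset_union_right
      (LinearMap.image_convexHull E₂ _ ▸ mem_image_of_mem _ hb)
  refine mem_diagonalSet_of_smul_le hμ.le
    (convex_convexHull ℝ _ ha' hb' (div_pos hμ₁ hμ).le (div_pos hμ₂ hμ).le ?_) ?_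
  · rw [← add_div, div_self hμ.ne']
  · have hsplit : (μ₁ + μ₂) • ((μ₁ / (μ₁ + μ₂)) • E₁ a + (μ₂ / (μ₁ + μ₂)) • E₂ b) =
        E₁ (μ₁ • a) + E₂ (μ₂ • b) := by
      simp only [smul_add, smul_smul, mul_div_cancel₀ _ hμ.ne', map_smul]
    rw [hsplit]
    exact (extend_zero_add_extend_zero_le_one_iff he₁ he₂ hdisj).2 ⟨hμa, hμb⟩

theorem diagonalSet_rename_add_rename (he₁ : Injective e₁) (he₂ : Injective e₂)
    (hdisj : Disjoint (range e₁) (range e₂)) {p : MvPolynomial ι k} (hp : constantCoeff p = 0)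
    (q : MvPolynomial ι' k) :
    diagonalSet (rename e₁ p + rename e₂ q) = diagonalSet p + diagonalSet q :=
  (diagonalSet_rename_add_rename_subset he₁ he₂ hdisj hp q).antisymm
    (add_subset_diagonalSet_rename_add_rename he₁ he₂ hdisj hp q)

theorem sigmaP_rename_add_rename (he₁ : Injective e₁) (he₂ : Injective e₂)
    (hdisj : Disjoint (range e₁) (range e₂)) {p : MvPolynomial ι k} (hp : constantCoeff p = 0)
    (q : MvPolynomial ι' k) :
    sigmaP (rename e₁ p + rename e₂ q) = sigmaP p + sigmaP q := by
  simp only [sigmaP_eq_sSup_diagonalSet, diagonalSet_rename_add_rename he₁ he₂ hdisj hp q]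
  exact ENNReal.sSup_ofReal_image_add (insert_nonempty _ _) (insert_nonempty _ _)
    (diagonalSet_subset_Ici p) (diagonalSet_subset_Ici q)

end Newton

theorem Fin.disjoint_range_castAdd_natAdd (n m : ℕ) :
    Disjoint (range (Fin.castAdd m : Fin n → Fin (n + m))) (range (Fin.natAdd n)) := by
  refine disjoint_left.2 ?_
  rintro _ ⟨i, rfl⟩ ⟨j, hj⟩
  have := congrArg Fin.val hj
  simp only [Fin.val_natAdd, Fin.val_castAdd] at this
  omega

theorem stmt2_general {k : Type*} [CommRing k] {n m : ℕ}
    (f : MvPolynomial (Fin n) k) (g : MvPolynomial (Fin m) k)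
    (hf : constantCoeff f = 0) :
    sigmaP (rename (Fin.castAdd m) f + rename (Fin.natAdd n) g) = sigmaP f + sigmaP g :=
  sigmaP_rename_add_rename (Fin.castAdd_injective _ _) (Fin.natAdd_injective _ _)
    (Fin.disjoint_range_castAdd_natAdd n m) hf g

theorem stmt2 {k : Type*} [CommRing k] {n m : ℕ}
    (f : MvPolynomial (Fin n) k) (g : MvPolynomial (Fin m) k)
    (hf : constantCoeff f = 0) (hg : constantCoeff g = 0) :
    sigmaP (rename (Fin.castAdd m) f + rename (Fin.natAdd n) g) = sigmaP f + sigmaP g :=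
  stmt2_general f g hf
end

section
/- Let f be a nonzero polynomial in n variables vanishing at the origin with n ≥ 2, and suppose every point (i₁,…,i_{n−2},i) ∈ supp f' of the polynomial f' = f(x₁,…,x_{n−1},x_{n−1}) arises from a point of supp f by summing the last two coordinates. Then for every point (i₁,…,i_{n−2},i) ∈ Δ₀(f') there exist a,b ∈ ℝ_{≥0} with a+b = i and (i₁,…,i_{n−2},a,b) ∈ Δ₀(f). -/
/-! A point of `Δ₀(f')` is `c + r` with `c` in the convex hull of `supp f'` and `r ≥ 0`. Since
`supp f'` lies in the image of `supp f` under the linear map adding the last two coordinates, `c`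
is the image of a point `q` of the convex hull of `supp f`. Splitting the last coordinate of
`c + r` as `q_n` and `q_{n+1} + r_n` then writes the required point as `q` plus a nonnegative
vector. -/

open MvPolynomial Pointwise

lemma suppSet_subset_nonneg {ι k : Type*} [CommSemiring k] (f : MvPolynomial ι k) :
    suppSet f ⊆ Set.Ici 0 := by
  rintro _ ⟨d, -, rfl⟩ i
  exact Nat.cast_nonneg (d i)

lemma convexHull_suppSet_subset_nonneg {ι k : Type*} [CommSemiring k] (f : MvPolynomial ι k) :
    convexHull ℝ (suppSet f) ⊆ Set.Ici 0 :=
  convexHull_min (suppSet_subset_nonneg f) (convex_Ici 0)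

lemma newton_subset_image_convexHull_add {ι κ k : Type*} [CommSemiring k]
    {f : MvPolynomial ι k} {g : MvPolynomial κ k} (L : (ι → ℝ) →ₗ[ℝ] (κ → ℝ))
    (h : suppSet g ⊆ L '' suppSet f) :
    newton g ⊆ L '' convexHull ℝ (suppSet f) + {x : κ → ℝ | ∀ i, 0 ≤ x i} := by
  rw [newton, L.image_convexHull]
  exact Set.add_subset_add_right (convexHull_mono h)

section SplitLast

variable {n : ℕ}

def sumLastTwo (n : ℕ) : (Fin (n + 2) → ℝ) →ₗ[ℝ] (Fin (n + 1) → ℝ) where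
  toFun q j := if (j : ℕ) < n then q j.castSucc else q (Fin.last n).castSucc + q (Fin.last (n + 1))
  map_add' x y := by
    funext j
    by_cases h : (j : ℕ) < n <;> simp [h, add_add_add_comm]
  map_smul' c x := by
    funext j
    by_cases h : (j : ℕ) < n <;> simp [h, mul_add]

@[simp]
lemma sumLastTwo_castSucc (q : Fin (n + 2) → ℝ) (j : Fin n) :
    sumLastTwo n q j.castSucc = q j.castSucc.castSucc := by
  simp [sumLastTwo]

@[simp]
lemma sumLastTwo_last (q : Fin (n + 2) → ℝ) :
    sumLastTwo n q (Fin.last n) = q (Fin.last n).castSucc + q (Fin.last (n + 1)) := by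
  simp [sumLastTwo]

def splitLast (p : Fin (n + 1) → ℝ) (a b : ℝ) : Fin (n + 2) → ℝ :=
  Fin.snoc (α := fun _ => ℝ) (Fin.snoc (α := fun _ => ℝ) (Fin.init p) a) b

lemma funext_fin_add_two {α : Type*} {u v : Fin (n + 2) → α}
    (h : ∀ j : Fin n, u j.castSucc.castSucc = v j.castSucc.castSucc)
    (hn : u (Fin.last n).castSucc = v (Fin.last n).castSucc)
    (hn₁ : u (Fin.last (n + 1)) = v (Fin.last (n + 1))) : u = v := by
  funext i
  induction i using Fin.lastCases with
  | last => exact hn₁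
  | cast i =>
    induction i using Fin.lastCases with
    | last => exact hn
    | cast j => exact h j

lemma splitLast_add (p p' : Fin (n + 1) → ℝ) (a a' b b' : ℝ) :
    splitLast (p + p') (a + a') (b + b') = splitLast p a b + splitLast p' a' b' :=
  funext_fin_add_two (by simp [splitLast, Fin.init]) (by simp [splitLast]) (by simp [splitLast])

lemma splitLast_sumLastTwo (q : Fin (n + 2) → ℝ) :
    splitLast (sumLastTwo n q) (q (Fin.last n).castSucc) (q (Fin.last (n + 1))) = q :=
  funext_fin_add_two (by simp [splitLast, Fin.init]) (by simp [splitLast]) (by simp [splitLast])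

lemma splitLast_nonneg {p : Fin (n + 1) → ℝ} {a b : ℝ} (hp : 0 ≤ p) (ha : 0 ≤ a) (hb : 0 ≤ b) :
    0 ≤ splitLast p a b := by
  refine Fin.lastCases ?_ (Fin.lastCases ?_ fun j => ?_)
  · simpa [splitLast] using hb
  · simpa [splitLast] using ha
  · simpa [splitLast, Fin.init] using hp j.castSucc

lemma splitLast_sumLastTwo_add_mem_newton {k : Type*} [CommSemiring k]
    {f : MvPolynomial (Fin (n + 2)) k} {q : Fin (n + 2) → ℝ} (hq : q ∈ convexHull ℝ (suppSet f))
    {r : Fin (n + 1) → ℝ} (hr : 0 ≤ r) :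
    splitLast (sumLastTwo n q + r) (q (Fin.last n).castSucc) (q (Fin.last (n + 1)) + r (Fin.last n))
      ∈ newton f := by
  rw [← add_zero (q (Fin.last n).castSucc), splitLast_add, splitLast_sumLastTwo]
  exact Set.add_mem_add hq (splitLast_nonneg hr le_rfl (hr _))

end SplitLast

theorem stmt5 {k : Type*} [CommRing k] {n : ℕ}
    (f : MvPolynomial (Fin (n + 2)) k)
    (f' : MvPolynomial (Fin (n + 1)) k)
    (comb : (Fin (n + 2) → ℝ) → (Fin (n + 1) → ℝ))
    (hcomb : comb = fun q => fun j : Fin (n + 1) =>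
      if h : (j : ℕ) < n then q ⟨j.1, by omega⟩ else q ⟨n, by omega⟩ + q ⟨n + 1, by omega⟩)
    (hsupp : suppSet f' ⊆ comb '' suppSet f) :
    ∀ p ∈ newton f', ∃ a b : ℝ, 0 ≤ a ∧ 0 ≤ b ∧ a + b = p (Fin.last n) ∧
      (fun i : Fin (n + 2) =>
        if h : (i : ℕ) < n then p ⟨i.1, by omega⟩ else if (i : ℕ) = n then a else b)
        ∈ newton f := by
  subst hcomb
  intro p hp
  obtain ⟨_, ⟨q, hq, rfl⟩, r, hr, rfl⟩ := newton_subset_image_convexHull_add (sumLastTwo n) hsupp hp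
  have hq₀ := convexHull_suppSet_subset_nonneg f hq
  refine ⟨q (Fin.last n).castSucc, q (Fin.last (n + 1)) + r (Fin.last n), hq₀ _,
    add_nonneg (hq₀ _) (hr _), ?_, ?_⟩
  · change _ = sumLastTwo n q (Fin.last n) + r (Fin.last n)
    rw [sumLastTwo_last, add_assoc]
  · convert splitLast_sumLastTwo_add_mem_newton hq hr using 1
    refine funext_fin_add_two (fun j => ?_) (by simp [splitLast]) (by simp [splitLast])
    simp only [splitLast, Fin.init, Fin.snoc_castSucc, Fin.val_castSucc, j.is_lt, dite_true]
    rfl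
end

section
/- Keep the setting f = h + g₁x₁ + … + g_s x_s with g₁,…,g_s ∈ k[z] nonzero and h ∈ k[y,z]. For I ⊆ {1,…,s} set f_I = h + Σ_{i∈I} g_i x_i. Then σ(f) ≤ σ(f_I) + s − #I; in particular σ(f) ≤ σ(h) + s. -/
open MvPolynomial Pointwise

/-! A point `(1/σ, …, 1/σ)` of the Newton polyhedron of `f` dominates a convex combination
`∑ w_d d` of exponents of `f`. An exponent involving some `x_i` with `i ∉ I` has `x_i`-degree at
least `1`, while the average `x_i`-degree is at most `1/σ`; so such exponents carry total weight
at most `m/σ`, where `m = s - #I`. The remaining exponents are exponents of `f_I`, and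
renormalising their weights (total at least `1 - m/σ`) puts `(1/(σ - m), …)` in the Newton
polyhedron of `f_I`. -/

open scoped Finset

lemma sum_filter_not_forall_eq_zero_le {ι : Type*} {S : Finset (ι →₀ ℕ)} {w : (ι →₀ ℕ) → ℝ}
    (hw0 : ∀ d ∈ S, 0 ≤ w d) (J : Finset ι) {c : ℝ}
    (hc : ∀ j ∈ J, ∑ d ∈ S, w d * d j ≤ c) :
    ∑ d ∈ S with ¬ ∀ j ∈ J, d j = 0, w d ≤ #J * c := by
  have hterm : ∀ d ∈ S, ¬ (∀ j ∈ J, d j = 0) → w d ≤ ∑ j ∈ J, w d * d j := by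
    intro d hd hdJ
    push Not at hdJ
    obtain ⟨j, hj, hdj⟩ := hdJ
    have hone : (1 : ℝ) ≤ ∑ j ∈ J, (d j : ℝ) :=
      (Nat.one_le_cast.mpr (Nat.one_le_iff_ne_zero.mpr hdj)).trans
        (Finset.single_le_sum (fun j _ => Nat.cast_nonneg (d j)) hj)
    rw [← Finset.mul_sum]
    exact le_mul_of_one_le_right (hw0 d hd) hone
  calc ∑ d ∈ S with ¬ ∀ j ∈ J, d j = 0, w d
      ≤ ∑ d ∈ S with ¬ ∀ j ∈ J, d j = 0, ∑ j ∈ J, w d * d j :=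
        Finset.sum_le_sum fun d hd => hterm d (Finset.mem_filter.mp hd).1
          (Finset.mem_filter.mp hd).2
    _ ≤ ∑ d ∈ S, ∑ j ∈ J, w d * d j :=
        Finset.sum_le_sum_of_subset_of_nonneg (Finset.filter_subset _ _) fun d hd _ =>
          Finset.sum_nonneg fun j _ => mul_nonneg (hw0 d hd) (Nat.cast_nonneg _)
    _ = ∑ j ∈ J, ∑ d ∈ S, w d * d j := Finset.sum_comm
    _ ≤ #J * c := by simpa using Finset.sum_le_sum hc

section NewtonPolyhedron

variable {ι k : Type*} [CommSemiring k]

lemma mem_newton_of_weights {f : MvPolynomial ι k} {S : Finset (ι →₀ ℕ)} (hS : S ⊆ f.support)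
    {w : (ι →₀ ℕ) → ℝ} (hw0 : ∀ d ∈ S, 0 ≤ w d) (hw1 : ∑ d ∈ S, w d = 1) {c : ι → ℝ}
    (hwc : ∀ i, ∑ d ∈ S, w d * d i ≤ c i) : c ∈ newton f := by
  set v : ι → ℝ := ∑ d ∈ S, w d • fun i => (d i : ℝ)
  have hv : v ∈ convexHull ℝ (suppSet f) := by
    rw [show v = _ from (S.centerMass_eq_of_sum_1 _ hw1).symm]
    exact S.centerMass_mem_convexHull hw0 (by rw [hw1]; exact one_pos)
      fun d hd => ⟨d, hS hd, rfl⟩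
  refine Set.mem_add.mpr ⟨v, hv, c - v, fun i => ?_, add_sub_cancel v c⟩
  simpa [v, Finset.sum_apply] using hwc i

lemma exists_weights_of_mem_newton {f : MvPolynomial ι k} {c : ι → ℝ} (hc : c ∈ newton f) :
    ∃ w : (ι →₀ ℕ) → ℝ, (∀ d ∈ f.support, 0 ≤ w d) ∧ ∑ d ∈ f.support, w d = 1 ∧
      ∀ i, ∑ d ∈ f.support, w d * d i ≤ c i := by
  classical
  obtain ⟨v, hv, u, hu, rfl⟩ := Set.mem_add.mp hc
  set e : (ι →₀ ℕ) → ι → ℝ := fun d i => d i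
  have he : Set.InjOn e f.support := fun a _ b _ hab =>
    Finsupp.ext fun i => Nat.cast_injective (R := ℝ) (congrFun hab i)
  have hsupp : suppSet f = ↑(f.support.image e) := (Finset.coe_image).symm
  rw [hsupp, Finset.mem_convexHull'] at hv
  obtain ⟨W, hW0, hW1, rfl⟩ := hv
  refine ⟨W ∘ e, fun d hd => hW0 _ (Finset.mem_image_of_mem e hd), ?_, fun i => ?_⟩
  · rwa [Finset.sum_image he] at hW1
  · rw [Finset.sum_image he]
    simpa [Finset.sum_apply, e] using hu i

lemma le_sigmaP {f : MvPolynomial ι k} {σ : ℝ} (hσ : 0 < σ)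
    (hmem : (fun _ : ι => 1 / σ) ∈ newton f) : ENNReal.ofReal σ ≤ sigmaP f :=
  le_sSup ⟨σ, hσ, rfl, hmem⟩

lemma sigmaP_le {f : MvPolynomial ι k} {a : ENNReal}
    (H : ∀ σ : ℝ, 0 < σ → (fun _ : ι => 1 / σ) ∈ newton f → ENNReal.ofReal σ ≤ a) :
    sigmaP f ≤ a :=
  sSup_le fun _ ⟨σ, hσ, hs, hmem⟩ => hs ▸ H σ hσ hmem

lemma sigmaP_rename_le {κ : Type*} {e : κ → ι} (he : Function.Injective e)
    (p : MvPolynomial κ k) : sigmaP (rename e p) ≤ sigmaP p := by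
  classical
  refine sigmaP_le fun σ hσ hmem => le_sigmaP hσ ?_
  obtain ⟨w, hw0, hw1, hwc⟩ := exists_weights_of_mem_newton hmem
  have hinj : Set.InjOn (Finsupp.mapDomain e) (p.support : Set (κ →₀ ℕ)) :=
    (Finsupp.mapDomain_injective he).injOn
  rw [support_rename_of_injective he, Finset.sum_image hinj] at hw1
  refine mem_newton_of_weights subset_rfl (w := w ∘ Finsupp.mapDomain e)
    (fun d hd => hw0 _ ?_) hw1 fun j => ?_
  · rw [support_rename_of_injective he]
    exact Finset.mem_image_of_mem _ hd
  · have := hwc (e j)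
    rw [support_rename_of_injective he, Finset.sum_image hinj] at this
    simpa [Finsupp.mapDomain_apply he] using this

theorem sigmaP_le_sigmaP_add_card {f p : MvPolynomial ι k} (J : Finset ι)
    (hfp : ∀ d : ι →₀ ℕ, (∀ j ∈ J, d j = 0) → coeff d f = coeff d p) :
    sigmaP f ≤ sigmaP p + #J := by
  refine sigmaP_le fun σ hσ hmem => ?_
  rcases le_or_gt σ #J with hle | hlt
  · calc ENNReal.ofReal σ ≤ ENNReal.ofReal #J := ENNReal.ofReal_le_ofReal hle
      _ = #J := ENNReal.ofReal_natCast _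
      _ ≤ sigmaP p + #J := le_add_self
  obtain ⟨w, hw0, hw1, hwc⟩ := exists_weights_of_mem_newton hmem
  set T := {d ∈ f.support | ∀ j ∈ J, d j = 0}
  have hTp : T ⊆ p.support := fun d hd => by
    obtain ⟨hdf, hdJ⟩ := Finset.mem_filter.mp hd
    rw [mem_support_iff, ← hfp d hdJ]
    exact mem_support_iff.mp hdf
  set μ := ∑ d ∈ T, w d
  have hμ : 1 - #J * (1 / σ) ≤ μ := by
    have := sum_filter_not_forall_eq_zero_le hw0 J fun j _ => hwc j
    have hsplit := Finset.sum_filter_add_sum_filter_not f.support (fun d => ∀ j ∈ J, d j = 0) w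
    rw [hw1] at hsplit
    linarith
  have hσJ : 0 < σ - #J := sub_pos.mpr hlt
  have hμ_pos : 0 < μ := by
    refine lt_of_lt_of_le ?_ hμ
    rw [sub_pos, mul_one_div, div_lt_one hσ]
    exact hlt
  have hmemp : (fun _ : ι => 1 / (σ - #J)) ∈ newton p := by
    refine mem_newton_of_weights hTp (w := fun d => w d / μ)
      (fun d hd => div_nonneg (hw0 d (Finset.filter_subset _ _ hd)) hμ_pos.le)
      (by rw [← Finset.sum_div, div_self hμ_pos.ne']) fun i => ?_
    have hTi : ∑ d ∈ T, w d * d i ≤ 1 / σ :=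
      (Finset.sum_le_sum_of_subset_of_nonneg (Finset.filter_subset _ _)
        fun d hd _ => mul_nonneg (hw0 d hd) (Nat.cast_nonneg _)).trans (hwc i)
    simp only [div_mul_eq_mul_div, ← Finset.sum_div]
    rw [div_le_div_iff₀ hμ_pos hσJ, one_mul]
    calc (∑ d ∈ T, w d * d i) * (σ - #J) ≤ 1 / σ * (σ - #J) :=
          mul_le_mul_of_nonneg_right hTi hσJ.le
      _ = 1 - #J * (1 / σ) := by field_simp
      _ ≤ μ := hμ
  calc ENNReal.ofReal σ = ENNReal.ofReal (σ - #J) + ENNReal.ofReal #J := by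
        rw [← ENNReal.ofReal_add hσJ.le (Nat.cast_nonneg _), sub_add_cancel]
    _ ≤ sigmaP p + #J := by
        rw [ENNReal.ofReal_natCast]
        exact add_le_add_left (le_sigmaP hσJ hmemp) _

end NewtonPolyhedron

lemma coeff_sum_mul_X_eq_zero {α σ R : Type*} [CommSemiring R] {A : Finset α}
    (q : α → MvPolynomial σ R) (v : α → σ) {d : σ →₀ ℕ} (hd : ∀ a ∈ A, d (v a) = 0) :
    coeff d (∑ a ∈ A, q a * X (v a)) = 0 := by
  classical
  rw [coeff_sum]
  refine Finset.sum_eq_zero fun a ha => ?_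
  rw [coeff_mul_X', if_neg (by simp [hd a ha])]

theorem stmt12_general {k : Type*} [CommRing k] {s t r : ℕ}
    (g : Fin s → MvPolynomial (Fin r) k)
    (h : MvPolynomial (Fin t ⊕ Fin r) k)
    (f : MvPolynomial (Fin s ⊕ Fin t ⊕ Fin r) k)
    (hf : f = rename Sum.inr h +
      ∑ i : Fin s, rename (Sum.inr ∘ Sum.inr) (g i) * X (Sum.inl i))
    (I : Finset (Fin s)) :
    sigmaP f ≤ sigmaP (rename Sum.inr h +
        ∑ i ∈ I, rename (Sum.inr ∘ Sum.inr) (g i) * X (Sum.inl i))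
      + ((s - I.card : ℕ) : ENNReal) ∧
    sigmaP f ≤ sigmaP h + (s : ENNReal) := by
  have key : ∀ I : Finset (Fin s), sigmaP f ≤ sigmaP (rename Sum.inr h +
      ∑ i ∈ I, rename (Sum.inr ∘ Sum.inr) (g i) * X (Sum.inl i)) + ((s - #I : ℕ) : ENNReal) := by
    intro I
    set J := Iᶜ.map (Function.Embedding.inl (β := Fin t ⊕ Fin r))
    have hJ : #J = s - #I := by simp [J, Finset.card_compl]
    refine hJ ▸ sigmaP_le_sigmaP_add_card J fun d hd => ?_
    rw [hf, ← Finset.sum_add_sum_compl I, ← add_assoc, coeff_add (p := _ + _),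
      coeff_sum_mul_X_eq_zero _ Sum.inl fun i hi => hd _ (Finset.mem_map_of_mem _ hi), add_zero]
  refine ⟨key I, (key ∅).trans ?_⟩
  simpa using sigmaP_rename_le Sum.inr_injective h

theorem stmt12 {k : Type*} [CommRing k] {s t r : ℕ}
    (g : Fin s → MvPolynomial (Fin r) k) (hg : ∀ i, g i ≠ 0)
    (h : MvPolynomial (Fin t ⊕ Fin r) k) (hh : constantCoeff h = 0)
    (f : MvPolynomial (Fin s ⊕ Fin t ⊕ Fin r) k)
    (hf : f = rename Sum.inr h +
      ∑ i : Fin s, rename (Sum.inr ∘ Sum.inr) (g i) * X (Sum.inl i))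
    (I : Finset (Fin s)) :
    sigmaP f ≤ sigmaP (rename Sum.inr h +
        ∑ i ∈ I, rename (Sum.inr ∘ Sum.inr) (g i) * X (Sum.inl i))
      + ((s - I.card : ℕ) : ENNReal) ∧
    sigmaP f ≤ sigmaP h + (s : ENNReal) :=
  stmt12_general g h f hf I
end
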